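/- Concrete Unlink-security bound for the UniHand Initial Authentication protocol (combined): let n_P, n_S be nonnegative reals and Adv_Unlink, Adv_MA, A_1, A_2, b_1, a_0, …, a_12, ε_1, …, ε_8 be nonnegative reals such that Adv_Unlink ≤ A_1 + A_2, A_1 ≤ b_1 + Adv_MA with b_1 = 0, A_2 = a_0, and the chain a_0 ≤ n_P·n_S·a_1, a_1 ≤ a_2 + ε_1, a_2 ≤ n_P·n_S·a_3, a_3 ≤ a_4, a_4 ≤ a_5 + ε_2, a_5 ≤ a_6 + ε_3, a_6 ≤ a_7 + ε_4, a_7 ≤ n_S·a_8, a_8 ≤ a_9 + ε_5, a_9 ≤ a_10 + ε_6, a_10 ≤ a_11 + ε_7, a_11 ≤ a_12 + ε_8, a_12 = 0 holds. Then Adv_Unlink ≤ Adv_MA + n_P·n_S·(ε_1 + n_P·n_S·(ε_2 + ε_3 + ε_4 + n_S·(ε_5 + ε_6 + ε_7 + ε_8))). -/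
import Mathlib


theorem unihand_Unlink_init_auth_combined
    (nP nS AdvUnlink AdvMA A1 A2 b1 a0 a1 a2 a3 a4 a5 a6 a7 a8 a9 a10 a11 a12
      ε1 ε2 ε3 ε4 ε5 ε6 ε7 ε8 : ℝ)
    (hnP : 0 ≤ nP) (hnS : 0 ≤ nS)
    (hAdvUnlink : 0 ≤ AdvUnlink) (hAdvMA : 0 ≤ AdvMA)
    (hA1 : 0 ≤ A1) (hA2 : 0 ≤ A2) (hb1 : 0 ≤ b1)
    (ha0 : 0 ≤ a0) (ha1 : 0 ≤ a1) (ha2 : 0 ≤ a2) (ha3 : 0 ≤ a3) (ha4 : 0 ≤ a4)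
    (ha5 : 0 ≤ a5) (ha6 : 0 ≤ a6) (ha7 : 0 ≤ a7) (ha8 : 0 ≤ a8) (ha9 : 0 ≤ a9)
    (ha10 : 0 ≤ a10) (ha11 : 0 ≤ a11) (ha12 : 0 ≤ a12)
    (hε1 : 0 ≤ ε1) (hε2 : 0 ≤ ε2) (hε3 : 0 ≤ ε3) (hε4 : 0 ≤ ε4)
    (hε5 : 0 ≤ ε5) (hε6 : 0 ≤ ε6) (hε7 : 0 ≤ ε7) (hε8 : 0 ≤ ε8)
    (hsplit : AdvUnlink ≤ A1 + A2)
    (hcase1 : A1 ≤ b1 + AdvMA)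
    (hb1' : b1 = 0)
    (hA2a0 : A2 = a0)
    (h01 : a0 ≤ nP * nS * a1)
    (h12 : a1 ≤ a2 + ε1)
    (h23 : a2 ≤ nP * nS * a3)
    (h34 : a3 ≤ a4)
    (h45 : a4 ≤ a5 + ε2)
    (h56 : a5 ≤ a6 + ε3)
    (h67 : a6 ≤ a7 + ε4)
    (h78 : a7 ≤ nS * a8)
    (h89 : a8 ≤ a9 + ε5)
    (h910 : a9 ≤ a10 + ε6)
    (h1011 : a10 ≤ a11 + ε7)
    (h1112 : a11 ≤ a12 + ε8)
    (h12'' : a12 = 0) :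
    AdvUnlink ≤ AdvMA + nP * nS * (ε1 + nP * nS * (ε2 + ε3 + ε4 +
      nS * (ε5 + ε6 + ε7 + ε8))) := by
  have h8 : a8 ≤ ε5 + ε6 + ε7 + ε8 := by linarith
  have h7 : a7 ≤ nS * (ε5 + ε6 + ε7 + ε8) :=
    le_trans h78 (mul_le_mul_of_nonneg_left h8 hnS)
  have h3 : a3 ≤ ε2 + ε3 + ε4 + nS * (ε5 + ε6 + ε7 + ε8) := by linarith
  have h2 : a2 ≤ nP * nS * (ε2 + ε3 + ε4 + nS * (ε5 + ε6 + ε7 + ε8)) :=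
    le_trans h23 (mul_le_mul_of_nonneg_left h3 (mul_nonneg hnP hnS))
  have h1 : a1 ≤ ε1 + nP * nS * (ε2 + ε3 + ε4 + nS * (ε5 + ε6 + ε7 + ε8)) := by linarith
  have h0 : a0 ≤ nP * nS * (ε1 + nP * nS * (ε2 + ε3 + ε4 + nS * (ε5 + ε6 + ε7 + ε8))) :=
    le_trans h01 (mul_le_mul_of_nonneg_left h1 (mul_nonneg hnP hnS))
  linarith
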